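/- arXiv:1706.10268 — 3 statements merged into one kernel-verified Lean document; each statement's English description precedes it below -/
import Mathlib

section
/- For a nonzero polynomial g over the finite field F_p of total degree at most d in n variables, the probability that g vanishes at a uniformly random point of F_p^n is at most nd/p (Schwartz-Zippel, the basis of sum-check soundness). -/
/-! Mathlib's Schwartz–Zippel lemma, sampling every coordinate from all of `ZMod p`, bounds the
proportion of zeros of `g` by `∑ i, degᵢ g / p ≤ n * d / p`; clearing denominators gives the count. -/

open MvPolynomial

open Finset in
theorem MvPolynomial.card_zeros_mul_card_le_sum_degreeOf_mul {R : Type*} [CommRing R] [IsDomain R]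
    [Fintype R] [DecidableEq R] {n : ℕ} {g : MvPolynomial (Fin n) R} (hg : g ≠ 0) :
    #{x : Fin n → R | eval x g = 0} * Fintype.card R ≤
      (∑ i, g.degreeOf i) * Fintype.card R ^ n := by
  have hR : (0 : ℚ≥0) < Fintype.card R := by exact_mod_cast Fintype.card_pos
  have h := schwartz_zippel_sum_degreeOf hg fun _ ↦ Finset.univ
  simp only [Fintype.piFinset_univ, Finset.card_univ, Finset.prod_const, Fintype.card_fin,
    ← Finset.sum_div] at h
  rw [div_le_div_iff₀ (by positivity) hR] at h
  exact_mod_cast h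

/-- **Schwartz–Zippel (sum-check soundness basis).**
For a nonzero polynomial `g` over `F_p` in `n` variables with degree at most `d`
in each variable (so total degree at most `n*d`), the number of points of `F_p^n`
where `g` vanishes is at most `n*d*p^(n-1)`; i.e., the probability that `g`
vanishes at a uniformly random point of `F_p^n` is at most `n*d/p`. -/
theorem schwartz_zippel_sumcheck (p : ℕ) [Fact p.Prime] (n d : ℕ)
    (g : MvPolynomial (Fin n) (ZMod p)) (hg : g ≠ 0)
    (hdeg : ∀ i : Fin n, MvPolynomial.degreeOf i g ≤ d) :
    (Finset.univ.filter fun x : Fin n → ZMod p => MvPolynomial.eval x g = 0).card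
      ≤ n * d * p ^ (n - 1) := by
  have hp : 0 < p := (Fact.out : p.Prime).pos
  have hsum : ∑ i, g.degreeOf i ≤ n * d := by
    simpa using Finset.sum_le_card_nsmul Finset.univ _ d fun i _ ↦ hdeg i
  have hpow : p ^ n ≤ p ^ (n - 1) * p := by
    rw [← pow_succ]; exact Nat.pow_le_pow_right hp (by omega)
  refine Nat.le_of_mul_le_mul_right ?_ hp
  calc _ ≤ (∑ i, g.degreeOf i) * p ^ n := by
        simpa using card_zeros_mul_card_le_sum_degreeOf_mul hg
    _ ≤ n * d * (p ^ (n - 1) * p) := by gcongr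
    _ = _ := by ring
end

section
/- If Z = W · Y is a matrix product over a field F with W an n_{i+1} × n_i matrix and Y an n_i × b matrix (with n_i, b powers of two), then the multilinear extension satisfies Z̃(q, r) = Σ_{j ∈ {0,1}^{log n_i}} W̃(q, j) · Ỹ(j, r) for all q ∈ F^{log n_{i+1}} and r ∈ F^{log b}. -/
/-- Boolean vectors viewed as field elements via `0 ↦ 0`, `1 ↦ 1`. -/
def boolToField {F : Type*} [CommRing F] {n : ℕ} (t : Fin n → Bool) : Fin n → F :=
  fun i => if t i then 1 else 0

/-- The Lagrange basis factor `Π_i ((1 - x_i)(1 - t_i) + x_i t_i)`. -/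
def chi {F : Type*} [CommRing F] {n : ℕ} (x : Fin n → F) (t : Fin n → Bool) : F :=
  ∏ i : Fin n, ((1 - x i) * (1 - boolToField t i) + x i * boolToField t i)

/-- Multilinear extension of a matrix `A : {0,1}^m × {0,1}^k → F` (a `2^m × 2^k`
matrix with rows and columns indexed by bit-strings), evaluated at
`(x, y) ∈ F^m × F^k`. -/
def mle2 {F : Type*} [CommRing F] {m k : ℕ}
    (A : (Fin m → Bool) → (Fin k → Bool) → F)
    (x : Fin m → F) (y : Fin k → F) : F :=
  ∑ t : Fin m → Bool, ∑ u : Fin k → Bool, chi x t * chi y u * A t u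

/-!
At a Boolean point the Lagrange factor `chi` is the Kronecker delta, so evaluating `W̃` or `Ỹ`
at a Boolean middle index `j` collapses one of the two sums in `mle2` to the `j`-th column of
`W` or the `j`-th row of `Y`. The right-hand side then becomes
`Σ_j Σ_t Σ_u χ_q(t) χ_r(u) W t j Y j u`, which is `Z̃(q, r)` after exchanging the sums.
-/

open Finset

section

variable {F : Type*} [CommRing F]

theorem chi_boolToField {n : ℕ} (j u : Fin n → Bool) :
    chi (boolToField j : Fin n → F) u = if j = u then 1 else 0 := by
  have factor : ∀ i, (1 - boolToField (F := F) j i) * (1 - boolToField u i)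
      + boolToField j i * boolToField u i = if j i = u i then 1 else 0 := by
    intro i
    unfold boolToField
    cases j i <;> cases u i <;> simp
  simp only [chi, factor, prod_boole, mem_univ, true_implies, funext_iff]

theorem mle2_boolToField_right {m k : ℕ} (A : (Fin m → Bool) → (Fin k → Bool) → F)
    (x : Fin m → F) (j : Fin k → Bool) :
    mle2 A x (boolToField j) = ∑ t, chi x t * A t j := by
  simp [mle2, chi_boolToField]

theorem mle2_boolToField_left {m k : ℕ} (A : (Fin m → Bool) → (Fin k → Bool) → F)
    (j : Fin m → Bool) (y : Fin k → F) :
    mle2 A (boolToField j) y = ∑ u, chi y u * A j u := by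
  simp [mle2, chi_boolToField]

end

/-- **Thaler's sum-check identity for matrix multiplication.**
If `Z = W · Y` with `W` a `2^a × 2^c` matrix and `Y` a `2^c × 2^e` matrix over a
field `F`, then for all `q ∈ F^a` and `r ∈ F^e`:
`Z̃(q, r) = Σ_{j ∈ {0,1}^c} W̃(q, j) · Ỹ(j, r)`. -/
theorem mle_matrix_mul {F : Type*} [Field F] {a c e : ℕ}
    (W : (Fin a → Bool) → (Fin c → Bool) → F)
    (Y : (Fin c → Bool) → (Fin e → Bool) → F)
    (Z : (Fin a → Bool) → (Fin e → Bool) → F)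
    (hZ : ∀ t u, Z t u = ∑ j : Fin c → Bool, W t j * Y j u)
    (q : Fin a → F) (r : Fin e → F) :
    mle2 Z q r = ∑ j : Fin c → Bool,
      mle2 W q (boolToField j) * mle2 Y (boolToField j) r := by
  simp only [mle2_boolToField_right, mle2_boolToField_left, sum_mul_sum]
  calc mle2 Z q r
      = ∑ t, ∑ u, ∑ j, chi q t * W t j * (chi r u * Y j u) := by
        simp only [mle2, hZ, mul_sum]
        exact sum_congr rfl fun t _ => sum_congr rfl fun u _ => sum_congr rfl fun j _ => by ring
    _ = ∑ j, ∑ t, ∑ u, chi q t * W t j * (chi r u * Y j u) :=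
        (sum_congr rfl fun _ _ => sum_comm).trans sum_comm
end

section
/- (Sum-check soundness, one round) Let g be a polynomial over F_p of degree at most d in its first variable. If a claimed value y does not equal Σ_{x_1 ∈ {0,1}} H(x_1), where H(X) := Σ_{x_2,...,x_n ∈ {0,1}} g(X, x_2,...,x_n), then for any polynomial h of degree at most d with h(0) + h(1) = y, the probability over uniformly random q ∈ F_p that h(q) = H(q) is at most d/p. -/
open MvPolynomial

/-!
The honest partial sum `H` is, as a function on `F_p`, the evaluation of the univariate polynomial
`S = Σ_rest g(X, rest)` of degree at most `d`. Since `h(0) + h(1) = y ≠ S(0) + S(1)`, the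
polynomials `h` and `S` differ, and two distinct polynomials of degree at most `d` over a domain
agree on at most `d` points.
-/

theorem Polynomial.card_filter_eval_eq_le_of_ne {R : Type*} [CommRing R] [IsDomain R]
    [DecidableEq R] (s : Finset R) {f g : Polynomial R} {d : ℕ} (hfg : f ≠ g)
    (hf : f.degree ≤ d) (hg : g.degree ≤ d) :
    (s.filter fun q => f.eval q = g.eval q).card ≤ d := by
  by_contra! hcard
  have hlt : (d : WithBot ℕ) < (s.filter fun q => f.eval q = g.eval q).card := by
    exact_mod_cast hcard
  exact hfg <| Polynomial.eq_of_degrees_lt_of_eval_finset_eq _ (hf.trans_lt hlt)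
    (hg.trans_lt hlt) fun q hq => (Finset.mem_filter.1 hq).2

section PartialSum

variable {R : Type*} [CommRing R] {n : ℕ}

noncomputable def partialSumPoly (g : MvPolynomial (Fin (n + 1)) R) : Polynomial R :=
  ∑ rest : Fin n → Bool, (finSuccEquiv R n g).map (eval (boolToField rest))

theorem eval_partialSumPoly (g : MvPolynomial (Fin (n + 1)) R) (X : R) :
    (partialSumPoly g).eval X =
      ∑ rest : Fin n → Bool, eval (Fin.cons X (boolToField rest)) g := by
  simp only [partialSumPoly, Polynomial.eval_finsetSum, eval_eq_eval_mv_eval']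

theorem degree_partialSumPoly_le (g : MvPolynomial (Fin (n + 1)) R) :
    (partialSumPoly g).degree ≤ degreeOf 0 g := by
  refine (Polynomial.degree_sum_le _ _).trans (Finset.sup_le fun rest _ => ?_)
  calc _ ≤ (finSuccEquiv R n g).degree := Polynomial.degree_map_le
    _ ≤ (finSuccEquiv R n g).natDegree := Polynomial.degree_le_natDegree
    _ = degreeOf 0 g := by rw [natDegree_finSuccEquiv]

end PartialSum

/-- **Sum-check soundness, one round.** Let `g` be a polynomial over `F_p` of
degree at most `d` in its first variable and let
`H(X) := Σ_{x_2,…,x_n ∈ {0,1}} g(X, x_2, …, x_n)` be the true partial-sum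
polynomial. If a claimed value `y` differs from `H(0) + H(1)`, then for any
polynomial `h` of degree at most `d` with `h(0) + h(1) = y`, the number of
`q ∈ F_p` with `h(q) = H(q)` is at most `d`; i.e., the check passes at a
uniformly random `q` with probability at most `d/p`. -/
theorem sumcheck_round_soundness (p : ℕ) [Fact p.Prime] {n d : ℕ}
    (g : MvPolynomial (Fin (n + 1)) (ZMod p))
    (hg : MvPolynomial.degreeOf 0 g ≤ d)
    (H : Polynomial (ZMod p))
    (hH : ∀ X : ZMod p, H.eval X =
      ∑ rest : Fin n → Bool,
        MvPolynomial.eval (Fin.cons X (boolToField rest)) g)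
    (y : ZMod p) (hy : y ≠ H.eval 0 + H.eval 1)
    (h : Polynomial (ZMod p)) (hdeg : h.degree ≤ d)
    (hcheck : h.eval 0 + h.eval 1 = y) :
    (Finset.univ.filter fun q : ZMod p => h.eval q = H.eval q).card ≤ d := by
  have hHS : ∀ q, H.eval q = (partialSumPoly g).eval q := fun q => by
    rw [hH, eval_partialSumPoly]
  have hne : h ≠ partialSumPoly g := by
    rintro rfl
    exact hy (by rw [← hcheck, hHS, hHS])
  have hSdeg : (partialSumPoly g).degree ≤ d :=
    (degree_partialSumPoly_le g).trans (by exact_mod_cast hg)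
  simp_rw [hHS]
  exact Polynomial.card_filter_eval_eq_le_of_ne _ hne hdeg hSdeg
end
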